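/- arXiv:1707.08112 — 9 statements merged into one kernel-verified Lean document; each statement's English description precedes it below -/
import Mathlib

section
/- Let ε, δ be real parameters and let (q,p) ∈ ℝ² satisfy ε² − q² ≠ 0. Define p̄ = p + 2εδq/(ε² − q²), and assume ε² − p̄² ≠ 0; define q̄ = q − 2εδp̄/(ε² − p̄²). Then the function I(q,p) = p²q² − ε²(p² + q²) − 2εδpq is invariant under this map: I(q̄, p̄) = I(q, p). -/
/-!
`I` is symmetric in `q` and `p` and quadratic in each. A half-step `p ↦ p̄` with
`(ε² − q²)(p̄ − p) = 2εδq` therefore changes `I` by `−4εδqp̄`, and the half-step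
`q ↦ q̄` with `(ε² − p̄²)(q − q̄) = 2εδp̄` changes it by `+4εδqp̄`; the two cancel.
-/

noncomputable section

def KdVinv (ε δ q p : ℝ) : ℝ :=
  p ^ 2 * q ^ 2 - ε ^ 2 * (p ^ 2 + q ^ 2) - 2 * ε * δ * p * q

theorem KdVinv_comm (ε δ q p : ℝ) : KdVinv ε δ q p = KdVinv ε δ p q := by
  unfold KdVinv
  ring

theorem KdVinv_sub_of_mul_sub_eq {ε δ q p p' : ℝ}
    (h : (ε ^ 2 - q ^ 2) * (p' - p) = 2 * ε * δ * q) :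
    KdVinv ε δ q p' - KdVinv ε δ q p = -4 * ε * δ * q * p' := by
  unfold KdVinv
  linear_combination (-(p' + p)) * h

/-- The function `I(q,p) = p²q² − ε²(p²+q²) − 2εδpq` is invariant under the
one-degree-of-freedom KdV map `p̄ = p + 2εδq/(ε²−q²)`, `q̄ = q − 2εδp̄/(ε²−p̄²)`. -/
theorem kdv_map_invariant (ε δ q p : ℝ) (h1 : ε ^ 2 - q ^ 2 ≠ 0)
    (pbar : ℝ) (hpbar : pbar = p + 2 * ε * δ * q / (ε ^ 2 - q ^ 2))
    (h2 : ε ^ 2 - pbar ^ 2 ≠ 0)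
    (qbar : ℝ) (hqbar : qbar = q - 2 * ε * δ * pbar / (ε ^ 2 - pbar ^ 2)) :
    KdVinv ε δ qbar pbar = KdVinv ε δ q p := by
  have hp : (ε ^ 2 - q ^ 2) * (pbar - p) = 2 * ε * δ * q := by
    rw [hpbar, add_sub_cancel_left, mul_div_cancel₀ _ h1]
  have hq : (ε ^ 2 - pbar ^ 2) * (q - qbar) = 2 * ε * δ * pbar := by
    rw [hqbar, sub_sub_cancel, mul_div_cancel₀ _ h2]
  have step_p := KdVinv_sub_of_mul_sub_eq hp
  have step_q := KdVinv_sub_of_mul_sub_eq hq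
  rw [KdVinv_comm ε δ pbar q, KdVinv_comm ε δ pbar qbar] at step_q
  linarith
end
end

section
/- Let ε, δ be real parameters and define H(q, p̄) = εδ·log(ε² − p̄²) + εδ·log(ε² − q²) on the region where ε² − q² > 0 and ε² − p̄² > 0. Then the KdV map of one degree of freedom, p̄ = p + 2εδq/(ε² − q²), q̄ = q − 2εδp̄/(ε² − p̄²), satisfies the discrete Hamilton equations p̄ − p = −∂H/∂q (q, p̄) and q̄ − q = ∂H/∂p̄ (q, p̄); that is, H is a generating function of the map, so the map is a canonical transformation. -/
noncomputable section

/-- The discrete Hamiltonian (generating function) of the one-degree-of-freedom KdV map: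
`H(q,p̄) = εδ·log(ε² − p̄²) + εδ·log(ε² − q²)`. -/
def kdvH (ε δ : ℝ) (q pbar : ℝ) : ℝ :=
  ε * δ * Real.log (ε ^ 2 - pbar ^ 2) + ε * δ * Real.log (ε ^ 2 - q ^ 2)

theorem hasDerivAt_log_sub_sq {a x : ℝ} (hx : a - x ^ 2 ≠ 0) :
    HasDerivAt (fun s => Real.log (a - s ^ 2)) (-(2 * x) / (a - x ^ 2)) x := by
  have hsub : HasDerivAt (fun s : ℝ => a - s ^ 2) (-(2 * x)) x := by
    simpa using (hasDerivAt_pow 2 x).const_sub a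
  exact hsub.log hx

theorem hasDerivAt_const_mul_log_sub_sq (c : ℝ) {a x : ℝ} (hx : a - x ^ 2 ≠ 0) :
    HasDerivAt (fun s => c * Real.log (a - s ^ 2)) (-(2 * c * x / (a - x ^ 2))) x :=
  ((hasDerivAt_log_sub_sq hx).const_mul c).congr_deriv (by ring)

theorem deriv_kdvH_fst (ε δ pbar : ℝ) {q : ℝ} (hq : ε ^ 2 - q ^ 2 ≠ 0) :
    deriv (fun s => kdvH ε δ s pbar) q = -(2 * ε * δ * q / (ε ^ 2 - q ^ 2)) := by
  simpa only [kdvH, zero_add, mul_assoc] using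
    ((hasDerivAt_const_mul_log_sub_sq (ε * δ) hq).const_add
      (ε * δ * Real.log (ε ^ 2 - pbar ^ 2))).deriv

theorem deriv_kdvH_snd (ε δ q : ℝ) {pbar : ℝ} (hpbar : ε ^ 2 - pbar ^ 2 ≠ 0) :
    deriv (fun s => kdvH ε δ q s) pbar = -(2 * ε * δ * pbar / (ε ^ 2 - pbar ^ 2)) := by
  simpa only [kdvH, mul_assoc] using
    ((hasDerivAt_const_mul_log_sub_sq (ε * δ) hpbar).add_const
      (ε * δ * Real.log (ε ^ 2 - q ^ 2))).deriv

/-- The one-degree-of-freedom KdV map satisfies the discrete Hamilton equations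
`p̄ − p = −∂H/∂q (q,p̄)` and `q̄ − q = ∂H/∂p̄ (q,p̄)` generated by
`H(q,p̄) = εδ log(ε²−p̄²) + εδ log(ε²−q²)`, on the region where
`ε² − q² > 0` and `ε² − p̄² > 0`. -/
theorem kdv_map_discrete_hamilton (ε δ q p : ℝ)
    (hq : ε ^ 2 - q ^ 2 > 0)
    (pbar : ℝ) (hpbar : pbar = p + 2 * ε * δ * q / (ε ^ 2 - q ^ 2))
    (hp : ε ^ 2 - pbar ^ 2 > 0)
    (qbar : ℝ) (hqbar : qbar = q - 2 * ε * δ * pbar / (ε ^ 2 - pbar ^ 2)) :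
    pbar - p = -(deriv (fun s => kdvH ε δ s pbar) q) ∧
    qbar - q = deriv (fun s => kdvH ε δ q s) pbar := by
  rw [deriv_kdvH_fst ε δ pbar hq.ne', deriv_kdvH_snd ε δ q hp.ne']
  constructor
  · rw [hpbar]; ring
  · rw [hqbar]; ring
end
end

section
/- Let ε, δ be real parameters and consider the two-degrees-of-freedom KdV map: p̄₁ = p₁ + εδ/(ε−q₁) − εδ/(ε+q₁+q₂), p̄₂ = p₂ + εδ/(ε−q₂) − εδ/(ε+q₁+q₂), q̄₁ = q₁ − εδ/(ε−p̄₁) + εδ/(ε+p̄₁−p̄₂), q̄₂ = q₂ + εδ/(ε+p̄₂) − εδ/(ε+p̄₁−p̄₂), defined wherever all denominators are nonzero. Then the function 𝒫₂(q₁,q₂,p₁,p₂) = δε·[x₁(y₀−y₁) + x₂(y₂−y₀) + x₃(y₁−y₂)] + x₁x₂y₀(y₁+y₂) + x₁x₃y₁(y₀+y₂) + x₂x₃y₂(y₀+y₁), with x₁ = ε−p₁, x₂ = ε+p₂, x₃ = ε+p₁−p₂, y₀ = ε+q₁+q₂, y₁ = ε−q₁, y₂ = ε−q₂, is invariant under this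 map: 𝒫₂(q̄₁,q̄₂,p̄₁,p̄₂) = 𝒫₂(q₁,q₂,p₁,p₂). -/
noncomputable section

/-- The second invariant `𝒫₂` of the two-degrees-of-freedom KdV map, in the
abbreviations `x₁ = ε−p₁`, `x₂ = ε+p₂`, `x₃ = ε+p₁−p₂`, `y₀ = ε+q₁+q₂`,
`y₁ = ε−q₁`, `y₂ = ε−q₂`. -/
def kdv2P2 (ε δ q1 q2 p1 p2 : ℝ) : ℝ :=
  let x1 := ε - p1; let x2 := ε + p2; let x3 := ε + p1 - p2
  let y0 := ε + q1 + q2; let y1 := ε - q1; let y2 := ε - q2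
  δ * ε * (x1 * (y0 - y1) + x2 * (y2 - y0) + x3 * (y1 - y2)) +
    x1 * x2 * y0 * (y1 + y2) + x1 * x3 * y1 * (y0 + y2) + x2 * x3 * y2 * (y0 + y1)

/-! The map is the composition of two shears: `p ↦ p̄` at fixed `q`, then `q ↦ q̄` at fixed `p̄`.
Each shear changes `𝒫₂` by the same amount `6εδ(q₁p̄₁ + q₂p̄₂)`, with opposite signs. -/

theorem kdv2P2_p_shear {ε δ q1 q2 p1 p2 pbar1 pbar2 : ℝ}
    (h1 : ε - q1 ≠ 0) (h2 : ε - q2 ≠ 0) (h3 : ε + q1 + q2 ≠ 0)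
    (hpbar1 : pbar1 = p1 + ε * δ / (ε - q1) - ε * δ / (ε + q1 + q2))
    (hpbar2 : pbar2 = p2 + ε * δ / (ε - q2) - ε * δ / (ε + q1 + q2)) :
    kdv2P2 ε δ q1 q2 pbar1 pbar2 + 6 * ε * δ * (q1 * pbar1 + q2 * pbar2) =
      kdv2P2 ε δ q1 q2 p1 p2 := by
  subst hpbar1 hpbar2
  unfold kdv2P2
  field_simp
  ring

theorem kdv2P2_q_shear {ε δ q1 q2 p1 p2 qbar1 qbar2 : ℝ}
    (h4 : ε - p1 ≠ 0) (h5 : ε + p2 ≠ 0) (h6 : ε + p1 - p2 ≠ 0)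
    (hqbar1 : qbar1 = q1 - ε * δ / (ε - p1) + ε * δ / (ε + p1 - p2))
    (hqbar2 : qbar2 = q2 + ε * δ / (ε + p2) - ε * δ / (ε + p1 - p2)) :
    kdv2P2 ε δ qbar1 qbar2 p1 p2 =
      kdv2P2 ε δ q1 q2 p1 p2 + 6 * ε * δ * (q1 * p1 + q2 * p2) := by
  subst hqbar1 hqbar2
  unfold kdv2P2
  field_simp
  ring

/-- `𝒫₂` is invariant under the two-degrees-of-freedom KdV map. -/
theorem kdv2_map_invariant_P2 (ε δ q1 q2 p1 p2 : ℝ)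
    (h1 : ε - q1 ≠ 0) (h2 : ε - q2 ≠ 0) (h3 : ε + q1 + q2 ≠ 0)
    (pbar1 : ℝ)
    (hpbar1 : pbar1 = p1 + ε * δ / (ε - q1) - ε * δ / (ε + q1 + q2))
    (pbar2 : ℝ)
    (hpbar2 : pbar2 = p2 + ε * δ / (ε - q2) - ε * δ / (ε + q1 + q2))
    (h4 : ε - pbar1 ≠ 0) (h5 : ε + pbar2 ≠ 0) (h6 : ε + pbar1 - pbar2 ≠ 0)
    (qbar1 : ℝ)
    (hqbar1 : qbar1 = q1 - ε * δ / (ε - pbar1) + ε * δ / (ε + pbar1 - pbar2))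
    (qbar2 : ℝ)
    (hqbar2 : qbar2 = q2 + ε * δ / (ε + pbar2) - ε * δ / (ε + pbar1 - pbar2)) :
    kdv2P2 ε δ qbar1 qbar2 pbar1 pbar2 = kdv2P2 ε δ q1 q2 p1 p2 := by
  have hp := kdv2P2_p_shear h1 h2 h3 hpbar1 hpbar2
  have hq := kdv2P2_q_shear h4 h5 h6 hqbar1 hqbar2
  linarith
end
end

section
/- Let ε, δ be real parameters. The two-degrees-of-freedom KdV map Φ(q₁,q₂,p₁,p₂) = (q̄₁,q̄₂,p̄₁,p̄₂), given by p̄₁ = p₁ + εδ/(ε−q₁) − εδ/(ε+q₁+q₂), p̄₂ = p₂ + εδ/(ε−q₂) − εδ/(ε+q₁+q₂), q̄₁ = q₁ − εδ/(ε−p̄₁) + εδ/(ε+p̄₁−p̄₂), q̄₂ = q₂ + εδ/(ε+p̄₂) − εδ/(ε+p̄₁−p̄₂), is symplectic: at every point of its domain (where all denominators are nonzero), the 4×4 Jacobian matrix J of Φ in the coordinates (q₁,q₂,p₁,p₂) satisfies Jᵀ·Ω₀·J = Ω₀, where Ω₀ is the standard symplectic matrix Ω₀ = [[0, I₂],[−I₂,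 0]]. Equivalently, Φ preserves the two-form Ω = dq₁∧dp₁ + dq₂∧dp₂. -/
noncomputable section

open Matrix

/-- Update `p̄₁` of the two-degrees-of-freedom KdV map. -/
def kdv2Pbar1 (ε δ q1 q2 p1 p2 : ℝ) : ℝ :=
  p1 + ε * δ / (ε - q1) - ε * δ / (ε + q1 + q2)

/-- Update `p̄₂` of the two-degrees-of-freedom KdV map. -/
def kdv2Pbar2 (ε δ q1 q2 p1 p2 : ℝ) : ℝ :=
  p2 + ε * δ / (ε - q2) - ε * δ / (ε + q1 + q2)

/-- Update `q̄₁` of the two-degrees-of-freedom KdV map. -/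
def kdv2Qbar1 (ε δ q1 q2 p1 p2 : ℝ) : ℝ :=
  q1 - ε * δ / (ε - kdv2Pbar1 ε δ q1 q2 p1 p2) +
    ε * δ / (ε + kdv2Pbar1 ε δ q1 q2 p1 p2 - kdv2Pbar2 ε δ q1 q2 p1 p2)

/-- Update `q̄₂` of the two-degrees-of-freedom KdV map. -/
def kdv2Qbar2 (ε δ q1 q2 p1 p2 : ℝ) : ℝ :=
  q2 + ε * δ / (ε + kdv2Pbar2 ε δ q1 q2 p1 p2) -
    ε * δ / (ε + kdv2Pbar1 ε δ q1 q2 p1 p2 - kdv2Pbar2 ε δ q1 q2 p1 p2)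

/-- The Jacobian matrix of the two-degrees-of-freedom KdV map in the coordinate ordering
`(q₁,q₂,p₁,p₂)`; rows are the components `(q̄₁,q̄₂,p̄₁,p̄₂)` and columns the variables. -/
def kdv2Jacobian (ε δ q1 q2 p1 p2 : ℝ) : Matrix (Fin 4) (Fin 4) ℝ :=
  !![deriv (fun s => kdv2Qbar1 ε δ s q2 p1 p2) q1,
       deriv (fun s => kdv2Qbar1 ε δ q1 s p1 p2) q2,
       deriv (fun s => kdv2Qbar1 ε δ q1 q2 s p2) p1,
       deriv (fun s => kdv2Qbar1 ε δ q1 q2 p1 s) p2;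
     deriv (fun s => kdv2Qbar2 ε δ s q2 p1 p2) q1,
       deriv (fun s => kdv2Qbar2 ε δ q1 s p1 p2) q2,
       deriv (fun s => kdv2Qbar2 ε δ q1 q2 s p2) p1,
       deriv (fun s => kdv2Qbar2 ε δ q1 q2 p1 s) p2;
     deriv (fun s => kdv2Pbar1 ε δ s q2 p1 p2) q1,
       deriv (fun s => kdv2Pbar1 ε δ q1 s p1 p2) q2,
       deriv (fun s => kdv2Pbar1 ε δ q1 q2 s p2) p1,
       deriv (fun s => kdv2Pbar1 ε δ q1 q2 p1 s) p2;
     deriv (fun s => kdv2Pbar2 ε δ s q2 p1 p2) q1,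
       deriv (fun s => kdv2Pbar2 ε δ q1 s p1 p2) q2,
       deriv (fun s => kdv2Pbar2 ε δ q1 q2 s p2) p1,
       deriv (fun s => kdv2Pbar2 ε δ q1 q2 p1 s) p2]

/-- The standard symplectic matrix `Ω₀ = [[0, I₂],[−I₂, 0]]` on `ℝ⁴`. -/
def stdSymplectic4 : Matrix (Fin 4) (Fin 4) ℝ :=
  !![0, 0, 1, 0;
     0, 0, 0, 1;
     -1, 0, 0, 0;
     0, -1, 0, 0]

/-!
The map is a kick `p̄ = p + ∇V(q)` followed by a drift `q̄ = q - ∇T(p̄)`, where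
`V(q) = -εδ (log |ε - q₁| + log |ε - q₂| + log |ε + q₁ + q₂|)` and
`T(p) = -εδ (log |ε - p₁| + log |ε + p₂| + log |ε + p₁ - p₂|)`. Hence its Jacobian is the product
`[[1, -B], [0, 1]] * [[1, 0], [A, 1]]` of two shears, with `A` the Hessian of `V` at `q` and `B`
the Hessian of `T` at `p̄`. Both are symmetric, and a shear by a symmetric block is symplectic.
-/

namespace Matrix

variable {l R : Type*} [Fintype l] [DecidableEq l] [CommRing R]

theorem IsSymm.fromBlocks_one_zero_self_one_mem_symplecticGroup {A : Matrix l l R}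
    (hA : A.IsSymm) : Matrix.fromBlocks 1 0 A 1 ∈ symplecticGroup l R := by
  simp [SymplecticGroup.fromBlocks_mem_iff, hA.eq]

theorem IsSymm.fromBlocks_one_self_zero_one_mem_symplecticGroup {B : Matrix l l R}
    (hB : B.IsSymm) : Matrix.fromBlocks 1 B 0 1 ∈ symplecticGroup l R := by
  simp [SymplecticGroup.fromBlocks_mem_iff, hB.eq]

theorem fromBlocks_one_sub_mul_neg_mem_symplecticGroup {A B : Matrix l l R} (hA : A.IsSymm)
    (hB : B.IsSymm) : fromBlocks (1 - B * A) (-B) A 1 ∈ symplecticGroup l R := by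
  have hshears := mul_mem hB.neg.fromBlocks_one_self_zero_one_mem_symplecticGroup
    hA.fromBlocks_one_zero_self_one_mem_symplecticGroup
  simpa [fromBlocks_multiply, sub_eq_add_neg] using hshears

end Matrix

theorem stdSymplectic4_eq_reindex_neg_J :
    stdSymplectic4 = reindex finSumFinEquiv finSumFinEquiv (-J (Fin 2) ℝ) := by
  ext i j
  fin_cases i <;> fin_cases j <;>
    simp [stdSymplectic4, J, finSumFinEquiv, Fin.addCases, Fin.castLT, Fin.subNat]

theorem transpose_reindex_mul_stdSymplectic4_mul_reindex
    {M : Matrix (Fin 2 ⊕ Fin 2) (Fin 2 ⊕ Fin 2) ℝ} (hM : M ∈ symplecticGroup (Fin 2) ℝ) :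
    (reindex finSumFinEquiv finSumFinEquiv M)ᵀ * stdSymplectic4 *
      reindex finSumFinEquiv finSumFinEquiv M = stdSymplectic4 := by
  rw [stdSymplectic4_eq_reindex_neg_J, transpose_reindex, ← coe_reindexAlgEquiv ℝ ℝ, ← map_mul,
    ← map_mul, Matrix.mul_neg, Matrix.neg_mul, SymplecticGroup.mem_iff'.1 hM]

theorem HasDerivAt.const_div {𝕜 : Type*} [NontriviallyNormedField 𝕜] {u : 𝕜 → 𝕜} {u' x : 𝕜}
    (c : 𝕜) (hu : HasDerivAt u u' x) (hx : u x ≠ 0) :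
    HasDerivAt (fun y => c / u y) (-(c * u') / u x ^ 2) x :=
  ((hasDerivAt_const x c).div hu hx).congr_deriv (by ring)

def kdv2KickHessian (ε δ q1 q2 : ℝ) : Matrix (Fin 2) (Fin 2) ℝ :=
  !![ε * δ / (ε - q1) ^ 2 + ε * δ / (ε + q1 + q2) ^ 2, ε * δ / (ε + q1 + q2) ^ 2;
     ε * δ / (ε + q1 + q2) ^ 2, ε * δ / (ε - q2) ^ 2 + ε * δ / (ε + q1 + q2) ^ 2]

def kdv2DriftHessian (ε δ p1 p2 : ℝ) : Matrix (Fin 2) (Fin 2) ℝ :=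
  !![ε * δ / (ε - p1) ^ 2 + ε * δ / (ε + p1 - p2) ^ 2, -(ε * δ / (ε + p1 - p2) ^ 2);
     -(ε * δ / (ε + p1 - p2) ^ 2), ε * δ / (ε + p2) ^ 2 + ε * δ / (ε + p1 - p2) ^ 2]

theorem kdv2KickHessian_isSymm (ε δ q1 q2 : ℝ) : (kdv2KickHessian ε δ q1 q2).IsSymm := by
  ext i j
  fin_cases i <;> fin_cases j <;> rfl

theorem kdv2DriftHessian_isSymm (ε δ p1 p2 : ℝ) : (kdv2DriftHessian ε δ p1 p2).IsSymm := by
  ext i j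
  fin_cases i <;> fin_cases j <;> rfl

section Derivatives

variable {ε δ : ℝ} {f₁ f₂ g₁ g₂ : ℝ → ℝ} {f₁' f₂' g₁' g₂' t : ℝ}

theorem hasDerivAt_kdv2Pbar (hf₁ : HasDerivAt f₁ f₁' t) (hf₂ : HasDerivAt f₂ f₂' t)
    (hg₁ : HasDerivAt g₁ g₁' t) (hg₂ : HasDerivAt g₂ g₂' t)
    (h1 : ε - f₁ t ≠ 0) (h2 : ε - f₂ t ≠ 0) (h3 : ε + f₁ t + f₂ t ≠ 0) :
    HasDerivAt (fun s => kdv2Pbar1 ε δ (f₁ s) (f₂ s) (g₁ s) (g₂ s))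
        (g₁' + (kdv2KickHessian ε δ (f₁ t) (f₂ t) *ᵥ ![f₁', f₂']) 0) t ∧
      HasDerivAt (fun s => kdv2Pbar2 ε δ (f₁ s) (f₂ s) (g₁ s) (g₂ s))
        (g₂' + (kdv2KickHessian ε δ (f₁ t) (f₂ t) *ᵥ ![f₁', f₂']) 1) t := by
  have hsum := ((hf₁.const_add ε).add hf₂).const_div (ε * δ) h3
  constructor
  · refine ((hg₁.add ((hf₁.const_sub ε).const_div (ε * δ) h1)).sub hsum).congr_deriv ?_
    simp only [kdv2KickHessian, mulVec, dotProduct, Fin.sum_univ_two, of_apply, cons_val',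
      cons_val_zero, cons_val_one, cons_val_fin_one, Pi.add_apply]
    ring
  · refine ((hg₂.add ((hf₂.const_sub ε).const_div (ε * δ) h2)).sub hsum).congr_deriv ?_
    simp only [kdv2KickHessian, mulVec, dotProduct, Fin.sum_univ_two, of_apply, cons_val',
      cons_val_zero, cons_val_one, cons_val_fin_one, Pi.add_apply]
    ring

theorem hasDerivAt_kdv2Qbar {P₁' P₂' : ℝ} (hf₁ : HasDerivAt f₁ f₁' t) (hf₂ : HasDerivAt f₂ f₂' t)
    (hP₁ : HasDerivAt (fun s => kdv2Pbar1 ε δ (f₁ s) (f₂ s) (g₁ s) (g₂ s)) P₁' t)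
    (hP₂ : HasDerivAt (fun s => kdv2Pbar2 ε δ (f₁ s) (f₂ s) (g₁ s) (g₂ s)) P₂' t)
    (h4 : ε - kdv2Pbar1 ε δ (f₁ t) (f₂ t) (g₁ t) (g₂ t) ≠ 0)
    (h5 : ε + kdv2Pbar2 ε δ (f₁ t) (f₂ t) (g₁ t) (g₂ t) ≠ 0)
    (h6 : ε + kdv2Pbar1 ε δ (f₁ t) (f₂ t) (g₁ t) (g₂ t) -
      kdv2Pbar2 ε δ (f₁ t) (f₂ t) (g₁ t) (g₂ t) ≠ 0) :
    HasDerivAt (fun s => kdv2Qbar1 ε δ (f₁ s) (f₂ s) (g₁ s) (g₂ s))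
        (f₁' - (kdv2DriftHessian ε δ (kdv2Pbar1 ε δ (f₁ t) (f₂ t) (g₁ t) (g₂ t))
          (kdv2Pbar2 ε δ (f₁ t) (f₂ t) (g₁ t) (g₂ t)) *ᵥ ![P₁', P₂']) 0) t ∧
      HasDerivAt (fun s => kdv2Qbar2 ε δ (f₁ s) (f₂ s) (g₁ s) (g₂ s))
        (f₂' - (kdv2DriftHessian ε δ (kdv2Pbar1 ε δ (f₁ t) (f₂ t) (g₁ t) (g₂ t))
          (kdv2Pbar2 ε δ (f₁ t) (f₂ t) (g₁ t) (g₂ t)) *ᵥ ![P₁', P₂']) 1) t := by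
  have hdiff := ((hP₁.const_add ε).sub hP₂).const_div (ε * δ) h6
  constructor
  · refine ((hf₁.sub ((hP₁.const_sub ε).const_div (ε * δ) h4)).add hdiff).congr_deriv ?_
    simp only [kdv2DriftHessian, mulVec, dotProduct, Fin.sum_univ_two, of_apply, cons_val',
      cons_val_zero, cons_val_one, cons_val_fin_one, Pi.sub_apply]
    ring
  · refine ((hf₂.add ((hP₂.const_add ε).const_div (ε * δ) h5)).sub hdiff).congr_deriv ?_
    simp only [kdv2DriftHessian, mulVec, dotProduct, Fin.sum_univ_two, of_apply, cons_val',
      cons_val_zero, cons_val_one, cons_val_fin_one, Pi.sub_apply]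
    ring

end Derivatives

theorem kdv2Jacobian_eq_reindex_fromBlocks {ε δ q1 q2 p1 p2 : ℝ}
    (h1 : ε - q1 ≠ 0) (h2 : ε - q2 ≠ 0) (h3 : ε + q1 + q2 ≠ 0)
    (h4 : ε - kdv2Pbar1 ε δ q1 q2 p1 p2 ≠ 0)
    (h5 : ε + kdv2Pbar2 ε δ q1 q2 p1 p2 ≠ 0)
    (h6 : ε + kdv2Pbar1 ε δ q1 q2 p1 p2 - kdv2Pbar2 ε δ q1 q2 p1 p2 ≠ 0) :
    kdv2Jacobian ε δ q1 q2 p1 p2 = reindex finSumFinEquiv finSumFinEquiv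
      (fromBlocks
        (1 - kdv2DriftHessian ε δ (kdv2Pbar1 ε δ q1 q2 p1 p2) (kdv2Pbar2 ε δ q1 q2 p1 p2) *
          kdv2KickHessian ε δ q1 q2)
        (-kdv2DriftHessian ε δ (kdv2Pbar1 ε δ q1 q2 p1 p2) (kdv2Pbar2 ε δ q1 q2 p1 p2))
        (kdv2KickHessian ε δ q1 q2) 1) := by
  obtain ⟨hP₁q₁, hP₂q₁⟩ := hasDerivAt_kdv2Pbar (δ := δ) (hasDerivAt_id' q1)
    (hasDerivAt_const q1 q2) (hasDerivAt_const q1 p1) (hasDerivAt_const q1 p2) h1 h2 h3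
  obtain ⟨hP₁q₂, hP₂q₂⟩ := hasDerivAt_kdv2Pbar (δ := δ) (hasDerivAt_const q2 q1)
    (hasDerivAt_id' q2) (hasDerivAt_const q2 p1) (hasDerivAt_const q2 p2) h1 h2 h3
  obtain ⟨hP₁p₁, hP₂p₁⟩ := hasDerivAt_kdv2Pbar (δ := δ) (hasDerivAt_const p1 q1)
    (hasDerivAt_const p1 q2) (hasDerivAt_id' p1) (hasDerivAt_const p1 p2) h1 h2 h3
  obtain ⟨hP₁p₂, hP₂p₂⟩ := hasDerivAt_kdv2Pbar (δ := δ) (hasDerivAt_const p2 q1)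
    (hasDerivAt_const p2 q2) (hasDerivAt_const p2 p1) (hasDerivAt_id' p2) h1 h2 h3
  obtain ⟨hQ₁q₁, hQ₂q₁⟩ := hasDerivAt_kdv2Qbar (hasDerivAt_id' q1) (hasDerivAt_const q1 q2)
    hP₁q₁ hP₂q₁ h4 h5 h6
  obtain ⟨hQ₁q₂, hQ₂q₂⟩ := hasDerivAt_kdv2Qbar (hasDerivAt_const q2 q1) (hasDerivAt_id' q2)
    hP₁q₂ hP₂q₂ h4 h5 h6
  obtain ⟨hQ₁p₁, hQ₂p₁⟩ := hasDerivAt_kdv2Qbar (hasDerivAt_const p1 q1) (hasDerivAt_const p1 q2)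
    hP₁p₁ hP₂p₁ h4 h5 h6
  obtain ⟨hQ₁p₂, hQ₂p₂⟩ := hasDerivAt_kdv2Qbar (hasDerivAt_const p2 q1) (hasDerivAt_const p2 q2)
    hP₁p₂ hP₂p₂ h4 h5 h6
  rw [kdv2Jacobian, hQ₁q₁.deriv, hQ₁q₂.deriv, hQ₁p₁.deriv, hQ₁p₂.deriv, hQ₂q₁.deriv,
    hQ₂q₂.deriv, hQ₂p₁.deriv, hQ₂p₂.deriv, hP₁q₁.deriv, hP₁q₂.deriv, hP₁p₁.deriv, hP₁p₂.deriv,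
    hP₂q₁.deriv, hP₂q₂.deriv, hP₂p₁.deriv, hP₂p₂.deriv]
  ext i j
  fin_cases i <;> fin_cases j <;>
    simp [finSumFinEquiv, Fin.addCases, Fin.castLT, Fin.subNat, mulVec, dotProduct, mul_apply]

/-- The two-degrees-of-freedom KdV map is symplectic: wherever all the denominators
are nonzero, its Jacobian matrix `J` satisfies `Jᵀ Ω₀ J = Ω₀`. -/
theorem kdv2_map_symplectic (ε δ q1 q2 p1 p2 : ℝ)
    (h1 : ε - q1 ≠ 0) (h2 : ε - q2 ≠ 0) (h3 : ε + q1 + q2 ≠ 0)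
    (h4 : ε - kdv2Pbar1 ε δ q1 q2 p1 p2 ≠ 0)
    (h5 : ε + kdv2Pbar2 ε δ q1 q2 p1 p2 ≠ 0)
    (h6 : ε + kdv2Pbar1 ε δ q1 q2 p1 p2 - kdv2Pbar2 ε δ q1 q2 p1 p2 ≠ 0) :
    (kdv2Jacobian ε δ q1 q2 p1 p2)ᵀ * stdSymplectic4 * kdv2Jacobian ε δ q1 q2 p1 p2 =
      stdSymplectic4 := by
  rw [kdv2Jacobian_eq_reindex_fromBlocks h1 h2 h3 h4 h5 h6]
  exact transpose_reindex_mul_stdSymplectic4_mul_reindex <|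
    fromBlocks_one_sub_mul_neg_mem_symplecticGroup (kdv2KickHessian_isSymm ..)
      (kdv2DriftHessian_isSymm ..)
end
end

section
/- Let ε, δ be real parameters and define H(q₁,q₂,p̄₁,p̄₂) = εδ·log((ε+p̄₁−p̄₂)(ε−p̄₁)(ε+p̄₂)) + εδ·log((ε+q₁+q₂)(ε−q₁)(ε−q₂)) on the region where each of the six factors ε+p̄₁−p̄₂, ε−p̄₁, ε+p̄₂, ε+q₁+q₂, ε−q₁, ε−q₂ is positive. Then the two-degrees-of-freedom KdV map, p̄₁ = p₁ + εδ/(ε−q₁) − εδ/(ε+q₁+q₂), p̄₂ = p₂ + εδ/(ε−q₂) − εδ/(ε+q₁+q₂), q̄₁ = q₁ − εδ/(ε−p̄₁) + εδ/(ε+p̄₁−p̄₂), q̄₂ = q₂ + εδ/(ε+p̄₂) − εδ/(ε+p̄₁−p̄₂), satisfies the discrete Hamilton equations p̄ᵢ − pᵢ = −∂H/∂qᵢ and q̄ᵢ − qᵢ = ∂H/∂p̄ᵢ for i = 1, 2, with all partial derivatives evaluated at (q₁,q₂,p̄₁,p̄₂); hence H is a generating function of the map. -/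
/-! Each variable enters `H` through exactly two affine factors under a logarithm, so by the
logarithmic derivative of a product every partial derivative of `H` is a sum `±εδ / factor`
of two terms, and these are precisely the increments defining the map. -/

noncomputable section

/-- The generating function `H(q₁,q₂,p̄₁,p̄₂)`, with `pb1, pb2` standing for `p̄₁, p̄₂`. -/
def kdv2H (ε δ q1 q2 pb1 pb2 : ℝ) : ℝ :=
  ε * δ * Real.log ((ε + pb1 - pb2) * (ε - pb1) * (ε + pb2)) +
    ε * δ * Real.log ((ε + q1 + q2) * (ε - q1) * (ε - q2))

theorem HasDerivAt.log_mul_mul {f g h : ℝ → ℝ} {f' g' h' x : ℝ} (hf : HasDerivAt f f' x)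
    (hg : HasDerivAt g g' x) (hh : HasDerivAt h h' x) (hfx : f x ≠ 0) (hgx : g x ≠ 0)
    (hhx : h x ≠ 0) :
    HasDerivAt (fun s => Real.log (f s * g s * h s)) (f' / f x + g' / g x + h' / h x) x := by
  have hprod := ((hf.mul hg).mul hh).log (by simp [hfx, hgx, hhx])
  simp only [Pi.mul_apply] at hprod
  convert hprod using 1
  field_simp

section KdV2

variable {ε δ q1 q2 pb1 pb2 : ℝ}

theorem hasDerivAt_kdv2H_q1 (hq0 : ε + q1 + q2 ≠ 0) (hq1 : ε - q1 ≠ 0) (hq2 : ε - q2 ≠ 0) :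
    HasDerivAt (fun s => kdv2H ε δ s q2 pb1 pb2)
      (ε * δ / (ε + q1 + q2) - ε * δ / (ε - q1)) q1 := by
  have hsum : HasDerivAt (fun s : ℝ => ε + s + q2) 1 q1 := by
    simpa using ((hasDerivAt_id q1).const_add ε).add_const q2
  have hdiff : HasDerivAt (fun s : ℝ => ε - s) (-1) q1 := by
    simpa using (hasDerivAt_id q1).const_sub ε
  have hlog := hsum.log_mul_mul hdiff (hasDerivAt_const q1 (ε - q2)) hq0 hq1 hq2
  exact ((hlog.const_mul (ε * δ)).const_add
    (ε * δ * Real.log ((ε + pb1 - pb2) * (ε - pb1) * (ε + pb2)))).congr_deriv (by ring)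

theorem hasDerivAt_kdv2H_q2 (hq0 : ε + q1 + q2 ≠ 0) (hq1 : ε - q1 ≠ 0) (hq2 : ε - q2 ≠ 0) :
    HasDerivAt (fun s => kdv2H ε δ q1 s pb1 pb2)
      (ε * δ / (ε + q1 + q2) - ε * δ / (ε - q2)) q2 := by
  have hsum : HasDerivAt (fun s : ℝ => ε + q1 + s) 1 q2 := by
    simpa using (hasDerivAt_id q2).const_add (ε + q1)
  have hdiff : HasDerivAt (fun s : ℝ => ε - s) (-1) q2 := by
    simpa using (hasDerivAt_id q2).const_sub ε
  have hlog := hsum.log_mul_mul (hasDerivAt_const q2 (ε - q1)) hdiff hq0 hq1 hq2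
  exact ((hlog.const_mul (ε * δ)).const_add
    (ε * δ * Real.log ((ε + pb1 - pb2) * (ε - pb1) * (ε + pb2)))).congr_deriv (by ring)

theorem hasDerivAt_kdv2H_pb1 (hp0 : ε + pb1 - pb2 ≠ 0) (hp1 : ε - pb1 ≠ 0)
    (hp2 : ε + pb2 ≠ 0) :
    HasDerivAt (fun s => kdv2H ε δ q1 q2 s pb2)
      (ε * δ / (ε + pb1 - pb2) - ε * δ / (ε - pb1)) pb1 := by
  have hsum : HasDerivAt (fun s : ℝ => ε + s - pb2) 1 pb1 := by
    simpa using ((hasDerivAt_id pb1).const_add ε).sub_const pb2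
  have hdiff : HasDerivAt (fun s : ℝ => ε - s) (-1) pb1 := by
    simpa using (hasDerivAt_id pb1).const_sub ε
  have hlog := hsum.log_mul_mul hdiff (hasDerivAt_const pb1 (ε + pb2)) hp0 hp1 hp2
  exact ((hlog.const_mul (ε * δ)).add_const
    (ε * δ * Real.log ((ε + q1 + q2) * (ε - q1) * (ε - q2)))).congr_deriv (by ring)

theorem hasDerivAt_kdv2H_pb2 (hp0 : ε + pb1 - pb2 ≠ 0) (hp1 : ε - pb1 ≠ 0)
    (hp2 : ε + pb2 ≠ 0) :
    HasDerivAt (fun s => kdv2H ε δ q1 q2 pb1 s)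
      (ε * δ / (ε + pb2) - ε * δ / (ε + pb1 - pb2)) pb2 := by
  have hdiff : HasDerivAt (fun s : ℝ => ε + pb1 - s) (-1) pb2 := by
    simpa using (hasDerivAt_id pb2).const_sub (ε + pb1)
  have hsum : HasDerivAt (fun s : ℝ => ε + s) 1 pb2 := by
    simpa using (hasDerivAt_id pb2).const_add ε
  have hlog := hdiff.log_mul_mul (hasDerivAt_const pb2 (ε - pb1)) hsum hp0 hp1 hp2
  exact ((hlog.const_mul (ε * δ)).add_const
    (ε * δ * Real.log ((ε + q1 + q2) * (ε - q1) * (ε - q2)))).congr_deriv (by ring)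

end KdV2

/-- On the region where all six factors are positive, the two-degrees-of-freedom KdV map
satisfies the discrete Hamilton equations `p̄ᵢ − pᵢ = −∂H/∂qᵢ`, `q̄ᵢ − qᵢ = ∂H/∂p̄ᵢ`
(`i = 1,2`), with the partial derivatives evaluated at `(q₁,q₂,p̄₁,p̄₂)`; hence `H` is a
generating function of the map. -/
theorem kdv2_map_discrete_hamilton (ε δ q1 q2 p1 p2 : ℝ)
    (hy1 : 0 < ε - q1) (hy2 : 0 < ε - q2) (hy0 : 0 < ε + q1 + q2)
    (pbar1 : ℝ)
    (hpbar1 : pbar1 = p1 + ε * δ / (ε - q1) - ε * δ / (ε + q1 + q2))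
    (pbar2 : ℝ)
    (hpbar2 : pbar2 = p2 + ε * δ / (ε - q2) - ε * δ / (ε + q1 + q2))
    (hx1 : 0 < ε - pbar1) (hx2 : 0 < ε + pbar2) (hx3 : 0 < ε + pbar1 - pbar2)
    (qbar1 : ℝ)
    (hqbar1 : qbar1 = q1 - ε * δ / (ε - pbar1) + ε * δ / (ε + pbar1 - pbar2))
    (qbar2 : ℝ)
    (hqbar2 : qbar2 = q2 + ε * δ / (ε + pbar2) - ε * δ / (ε + pbar1 - pbar2)) :
    pbar1 - p1 = -(deriv (fun s => kdv2H ε δ s q2 pbar1 pbar2) q1) ∧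
    pbar2 - p2 = -(deriv (fun s => kdv2H ε δ q1 s pbar1 pbar2) q2) ∧
    qbar1 - q1 = deriv (fun s => kdv2H ε δ q1 q2 s pbar2) pbar1 ∧
    qbar2 - q2 = deriv (fun s => kdv2H ε δ q1 q2 pbar1 s) pbar2 := by
  refine ⟨?_, ?_, ?_, ?_⟩
  · rw [(hasDerivAt_kdv2H_q1 hy0.ne' hy1.ne' hy2.ne').deriv, hpbar1]
    ring
  · rw [(hasDerivAt_kdv2H_q2 hy0.ne' hy1.ne' hy2.ne').deriv, hpbar2]
    ring
  · rw [(hasDerivAt_kdv2H_pb1 hx3.ne' hx1.ne' hx2.ne').deriv, hqbar1]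
    ring
  · rw [(hasDerivAt_kdv2H_pb2 hx3.ne' hx1.ne' hx2.ne').deriv, hqbar2]
    ring
end
end

section
/- Let p, q, k ∈ ℂ and let u, ũ, û, û̃ ∈ ℂ satisfy the lattice KdV equation (p − q + û − ũ)(p + q − û̃ + u) = p² − q². Define the 2×2 matrix L(a; w, z) = [[a − w, 1],[k² − a² + (a − w)(a + z), a + z]]. Then the Lax compatibility (Zakharov–Shabat) condition holds for every k: L(p; û̃, û) · L(q; û, u) = L(q; û̃, ũ) · L(p; ũ, u). -/
noncomputable section

/-- The Lax matrix of the lattice KdV equation: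
`L(a; w, z) = [[a − w, 1],[k² − a² + (a − w)(a + z), a + z]]`. -/
def laxKdV (k a w z : ℂ) : Matrix (Fin 2) (Fin 2) ℂ :=
  !![a - w, 1;
     k ^ 2 - a ^ 2 + (a - w) * (a + z), a + z]

theorem laxKdV_mul_sub_mul (k p q u ut uh uth : ℂ) :
    laxKdV k p uth uh * laxKdV k q uh u - laxKdV k q uth ut * laxKdV k p ut u =
      ((p - q + uh - ut) * (p + q - uth + u) - (p ^ 2 - q ^ 2)) • !![-1, 0; -(ut + uh), 1] := by
  ext i j
  fin_cases i <;> fin_cases j <;> simp [laxKdV] <;> ring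

/-- If `u, ũ, û, û̃` satisfy the lattice KdV equation
`(p − q + û − ũ)(p + q − û̃ + u) = p² − q²`, then the Lax (Zakharov–Shabat)
compatibility condition `L(p; û̃, û)·L(q; û, u) = L(q; û̃, ũ)·L(p; ũ, u)` holds for
every value of the spectral parameter `k`. -/
theorem lattice_kdv_lax_compatibility (p q : ℂ) (u ut uh uth : ℂ)
    (h : (p - q + uh - ut) * (p + q - uth + u) = p ^ 2 - q ^ 2) :
    ∀ k : ℂ, laxKdV k p uth uh * laxKdV k q uh u = laxKdV k q uth ut * laxKdV k p ut u := by
  intro k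
  rw [← sub_eq_zero, laxKdV_mul_sub_mul, h, sub_self, zero_smul]
end
end

section
/- Let p, q, k ∈ ℂ and let v, ṽ, v̂, v̂̃ be nonzero complex numbers satisfying the lattice MKdV equation p·v·v̂ + q·v̂·v̂̃ = q·v·ṽ + p·ṽ·v̂̃. Define 𝔏(k; w, z) = [[p, w],[k²/z, p·w/z]] and 𝔐(k; w, z) = [[q, w],[k²/z, q·w/z]]. Then the Lax compatibility (Zakharov–Shabat) condition holds for every k: 𝔏(k; v̂̃, v̂) · 𝔐(k; v̂, v) = 𝔐(k; v̂̃, ṽ) · 𝔏(k; ṽ, v). -/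
noncomputable section

/-- The Lax matrix `𝔏(k; w, z) = [[p, w],[k²/z, p·w/z]]` of the lattice MKdV equation
(in the `n`-direction, with lattice parameter `p`). -/
def laxMKdVL (p k w z : ℂ) : Matrix (Fin 2) (Fin 2) ℂ :=
  !![p, w;
     k ^ 2 / z, p * w / z]

/-- The Lax matrix `𝔐(k; w, z) = [[q, w],[k²/z, q·w/z]]` of the lattice MKdV equation
(in the `m`-direction, with lattice parameter `q`). -/
def laxMKdVM (q k w z : ℂ) : Matrix (Fin 2) (Fin 2) ℂ :=
  !![q, w;
     k ^ 2 / z, q * w / z]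

/-!
Both Lax matrices are the same matrix function `(a, w, z) ↦ [[a, w], [k²/z, a·w/z]]`, evaluated at
the parameters `p` and `q`. A product of two of them that is chained through `z` has diagonal
`a·b + k²·w/u`, `k² + a·b·w/u`, symmetric in the two parameters, so the compatibility condition
reduces to its two off-diagonal entries. After cross-multiplication each of these says
`v̂·(p + q·v̂̃/v) = ṽ·(q + p·v̂̃/v)`, which is the lattice MKdV equation divided by `v`.
-/

theorem laxMKdVM_eq_laxMKdVL : laxMKdVM = laxMKdVL := rfl

theorem laxMKdVL_mul_laxMKdVL (a b k w z u : ℂ) (hz : z ≠ 0) :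
    laxMKdVL a k w z * laxMKdVL b k z u =
      !![a * b + k ^ 2 * w / u, z * (a + b * w / u);
         k ^ 2 / z * (b + a * w / u), k ^ 2 + a * b * w / u] := by
  ext i j
  fin_cases i <;> fin_cases j <;>
    simp only [laxMKdVL, Matrix.mul_apply, Fin.sum_univ_two, Matrix.of_apply, Matrix.cons_val',
      Matrix.cons_val_zero, Matrix.cons_val_one, Matrix.empty_val', Matrix.cons_val_fin_one,
      Fin.zero_eta, Fin.mk_one] <;>
    field_simp

theorem lattice_mkdv_lax_compatibility_general (p q : ℂ) (v vt vh vth : ℂ)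
    (hv : v ≠ 0) (hvt : vt ≠ 0) (hvh : vh ≠ 0)
    (h : p * v * vh + q * vh * vth = q * v * vt + p * vt * vth) :
    ∀ k : ℂ,
      laxMKdVL p k vth vh * laxMKdVM q k vh v = laxMKdVM q k vth vt * laxMKdVL p k vt v := by
  intro k
  have top_right : vh * (p + q * vth / v) = vt * (q + p * vth / v) := by
    field_simp
    linear_combination h
  have bottom_left : k ^ 2 / vh * (q + p * vth / v) = k ^ 2 / vt * (p + q * vth / v) := by
    rw [div_mul_eq_mul_div, div_mul_eq_mul_div, div_eq_div_iff hvh hvt]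
    linear_combination k ^ 2 * top_right.symm
  rw [laxMKdVM_eq_laxMKdVL, laxMKdVL_mul_laxMKdVL _ _ _ _ _ _ hvh,
    laxMKdVL_mul_laxMKdVL _ _ _ _ _ _ hvt, mul_comm p q, top_right, bottom_left]

/-- If the nonzero values `v, ṽ, v̂, v̂̃` satisfy the lattice MKdV equation
`p·v·v̂ + q·v̂·v̂̃ = q·v·ṽ + p·ṽ·v̂̃`, then the Lax (Zakharov–Shabat) compatibility
condition `𝔏(k; v̂̃, v̂)·𝔐(k; v̂, v) = 𝔐(k; v̂̃, ṽ)·𝔏(k; ṽ, v)` holds for every `k`. -/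
theorem lattice_mkdv_lax_compatibility (p q : ℂ) (v vt vh vth : ℂ)
    (hv : v ≠ 0) (hvt : vt ≠ 0) (hvh : vh ≠ 0) (hvth : vth ≠ 0)
    (h : p * v * vh + q * vh * vth = q * v * vt + p * vt * vth) :
    ∀ k : ℂ,
      laxMKdVL p k vth vh * laxMKdVM q k vh v = laxMKdVM q k vth vt * laxMKdVL p k vt v :=
  lattice_mkdv_lax_compatibility_general p q v vt vh vth hv hvt hvh h
end
end

section
/- Let ε, δ ∈ ℂ, set ω = εδ, and let x, y, x̄, ȳ : ℤ → ℂ be sequences with y_j ≠ 0 and x̄_j ≠ 0 for all j, satisfying the reduced KdV map relations x̄_j = x_j − ω/y_j + ω/y_{j−1} and ȳ_j = y_j + ω/x̄_j − ω/x̄_{j+1}. Define, for λ ∈ ℂ, the 2×2 matrices L_j(λ) = [[y_j, 1],[λ, 0]] · [[x_j, 1],[λ − ω, 0]], L̄_j(λ) = [[ȳ_j, 1],[λ, 0]] · [[x̄_j, 1],[λ − ω, 0]], and M_j(λ) = [[−ω/x̄_j, 1],[λ, −x̄_j]] · [[x_j − ω/y_j, 1],[λ, 0]]. Then the discrete Zakharov–Shabat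 equation L̄_j(λ) · M_j(λ) = M_{j+1}(λ) · L_j(λ) holds for all j ∈ ℤ and all λ ∈ ℂ. -/
noncomputable section

/-- The Lax matrix `L_j(λ) = [[y_j, 1],[λ, 0]]·[[x_j, 1],[λ − ω, 0]]` of the reduced
KdV mapping. -/
def kdvMapL (ω : ℂ) (x y : ℤ → ℂ) (j : ℤ) (lam : ℂ) : Matrix (Fin 2) (Fin 2) ℂ :=
  !![y j, 1; lam, 0] * !![x j, 1; lam - ω, 0]

/-- The Lax matrix `M_j(λ) = [[−ω/x̄_j, 1],[λ, −x̄_j]]·[[x_j − ω/y_j, 1],[λ, 0]]` of the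
reduced KdV mapping. -/
def kdvMapM (ω : ℂ) (x y xb : ℤ → ℂ) (j : ℤ) (lam : ℂ) : Matrix (Fin 2) (Fin 2) ℂ :=
  !![-ω / xb j, 1; lam, -xb j] * !![x j - ω / y j, 1; lam, 0]

/-!
Write `A_μ(a) = [[a, 1],[μ, 0]]` and the dressing factor `C(p) = [[−ω/p, 1],[λ, −p]]`, so that
`L_j = A_λ(y_j) A_{λ−ω}(x_j)` and `M_j = C(x̄_j) A_λ(u_j)` with `u_j = x_j − ω/y_j`.
Both sides of the Zakharov–Shabat equation reduce to `(λ − ω) A_λ(v) A_λ(u_j)`: on the left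
with `v = ȳ_j − ω/x̄_j`, because `A_{λ−ω}(p) C(p)` is `λ − ω` times a lower shear which
`A_λ` absorbs; on the right with `v = y_j − ω/x̄_{j+1}`, once the first map relation gives
`u_{j+1} = x̄_{j+1} − ω/y_j`. The second map relation says exactly that the two values of `v`
agree.
-/

section LaxFactor

variable {K : Type*}

def laxFactor [Ring K] (μ a : K) : Matrix (Fin 2) (Fin 2) K := !![a, 1; μ, 0]

theorem laxFactor_mul_lowerShear [CommRing K] (μ a c : K) :
    laxFactor μ a * !![1, 0; -c, 1] = laxFactor μ (a - c) := by
  ext i k; fin_cases i <;> fin_cases k <;> simp [laxFactor]; ring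

variable [Field K]

theorem laxFactor_mul_kdvDressing {ω μ p : K} (hp : p ≠ 0) :
    laxFactor (μ - ω) p * !![-ω / p, 1; μ, -p] = (μ - ω) • !![1, 0; -(ω / p), 1] := by
  ext i k; fin_cases i <;> fin_cases k <;> simp [laxFactor, mul_div_cancel₀ _ hp] <;> ring

theorem laxFactor_mul_kdvDressing_mul (ω μ v u : K) {p : K} (hp : p ≠ 0) :
    laxFactor μ v * laxFactor (μ - ω) p * (!![-ω / p, 1; μ, -p] * laxFactor μ u) =
      (μ - ω) • (laxFactor μ (v - ω / p) * laxFactor μ u) := by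
  rw [← mul_assoc, mul_assoc (laxFactor μ v), laxFactor_mul_kdvDressing hp, mul_smul_comm,
    laxFactor_mul_lowerShear, smul_mul_assoc]

theorem kdvDressing_mul_laxFactor_mul {ω μ x y q : K} (hy : y ≠ 0) (hq : q ≠ 0) :
    !![-ω / q, 1; μ, -q] * laxFactor μ (q - ω / y) * (laxFactor μ y * laxFactor (μ - ω) x) =
      (μ - ω) • (laxFactor μ (y - ω / q) * laxFactor μ (x - ω / y)) := by
  ext i k; fin_cases i <;> fin_cases k <;> simp [laxFactor] <;> field_simp <;> ring

end LaxFactor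

theorem reduced_kdv_zakharov_shabat_general (ω : ℂ)
    (x y xb yb : ℤ → ℂ)
    (hy : ∀ j : ℤ, y j ≠ 0) (hxb : ∀ j : ℤ, xb j ≠ 0)
    (hx : ∀ j : ℤ, xb j = x j - ω / y j + ω / y (j - 1))
    (hyb : ∀ j : ℤ, yb j = y j + ω / xb j - ω / xb (j + 1)) :
    ∀ (j : ℤ) (lam : ℂ),
      kdvMapL ω xb yb j lam * kdvMapM ω x y xb j lam =
        kdvMapM ω x y xb (j + 1) lam * kdvMapL ω x y j lam := by
  intro j lam
  have hu : x (j + 1) - ω / y (j + 1) = xb (j + 1) - ω / y j := by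
    rw [hx (j + 1), add_sub_cancel_right]; ring
  have hv : yb j - ω / xb j = y j - ω / xb (j + 1) := by rw [hyb j]; ring
  calc kdvMapL ω xb yb j lam * kdvMapM ω x y xb j lam
      = (lam - ω) • (laxFactor lam (yb j - ω / xb j) * laxFactor lam (x j - ω / y j)) :=
        laxFactor_mul_kdvDressing_mul ω lam (yb j) _ (hxb j)
    _ = (lam - ω) • (laxFactor lam (y j - ω / xb (j + 1)) * laxFactor lam (x j - ω / y j)) := by
        rw [hv]
    _ = kdvMapM ω x y xb (j + 1) lam * kdvMapL ω x y j lam := by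
        rw [← kdvDressing_mul_laxFactor_mul (hy j) (hxb (j + 1)), ← hu]
        rfl

/-- If the sequences `x, y, x̄, ȳ` satisfy the reduced KdV map relations
`x̄_j = x_j − ω/y_j + ω/y_{j−1}` and `ȳ_j = y_j + ω/x̄_j − ω/x̄_{j+1}` (with `ω = εδ`),
then the discrete Zakharov–Shabat equation `L̄_j(λ)·M_j(λ) = M_{j+1}(λ)·L_j(λ)` holds for
all `j` and all `λ`. -/
theorem reduced_kdv_zakharov_shabat (ε δ : ℂ) (ω : ℂ) (hω : ω = ε * δ)
    (x y xb yb : ℤ → ℂ)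
    (hy : ∀ j : ℤ, y j ≠ 0) (hxb : ∀ j : ℤ, xb j ≠ 0)
    (hx : ∀ j : ℤ, xb j = x j - ω / y j + ω / y (j - 1))
    (hyb : ∀ j : ℤ, yb j = y j + ω / xb j - ω / xb (j + 1)) :
    ∀ (j : ℤ) (lam : ℂ),
      kdvMapL ω xb yb j lam * kdvMapM ω x y xb j lam =
        kdvMapM ω x y xb (j + 1) lam * kdvMapL ω x y j lam :=
  reduced_kdv_zakharov_shabat_general ω x y xb yb hy hxb hx hyb
end
end

section
/- Let ω, 𝓘₀, B₁, C₁ ∈ ℂ with ω ≠ 0 and B₁ ≠ 0, and let μ, μ̄, x̄, r, r̄ ∈ ℂ with μ ≠ 0, μ̄ ≠ 0, x̄ ≠ 0 and μ ≠ μ̄. Suppose the coupled genus-one discrete Dubrovin equations hold: (i) r/μ + r̄/μ̄ = 𝓘₀·(μ − μ̄)/(μ·μ̄) + 2B₁·(x̄/ω)·(μ − μ̄), and (ii) r̄/μ̄ − r/μ = 𝓘₀·(μ + μ̄)/(μ·μ̄) + 2B₁·x̄ − 2C₁·ω/x̄. Then the second-degree discrete Dubrovin equation holds: (μ − μ̄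 − ω)·((r̄ − 𝓘₀)/μ̄)² − (μ − μ̄ + ω)·((r + 𝓘₀)/μ)² = (2ω/(μ·μ̄))·(r̄ − 𝓘₀)·(r + 𝓘₀) − 4B₁C₁·(μ − μ̄)². -/
noncomputable section

/-
With `P = (r + 𝓘₀)/μ`, `Q = (r̄ - 𝓘₀)/μ̄` and `d = μ - μ̄`, the two coupled equations say
`P + Q = 2 B₁ x̄ d / ω` and `Q - P = 2 B₁ x̄ - 2 C₁ ω / x̄`. The second-degree equation is
`(P + Q) (d (Q - P) - ω (P + Q)) = -4 B₁ C₁ d²`, and substituting the first relation into the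
second factor makes `x̄` cancel.
-/

section Field

variable {K : Type*} [Field K]

theorem add_div_add_sub_div_eq {μ μb r rb I0 : K} (hμ : μ ≠ 0) (hμb : μb ≠ 0) :
    (r + I0) / μ + (rb - I0) / μb = r / μ + rb / μb - I0 * ((μ - μb) / (μ * μb)) := by
  field_simp
  ring

theorem sub_div_sub_add_div_eq {μ μb r rb I0 : K} (hμ : μ ≠ 0) (hμb : μb ≠ 0) :
    (rb - I0) / μb - (r + I0) / μ = rb / μb - r / μ - I0 * ((μ + μb) / (μ * μb)) := by
  field_simp
  ring

theorem mul_sub_mul_eq_neg_four_mul_sq {s t d ω u B C : K} (hω : ω ≠ 0) (hu : u ≠ 0)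
    (hs : s = 2 * B * (u / ω) * d) (ht : t = 2 * B * u - 2 * C * (ω / u)) :
    s * (d * t - ω * s) = -4 * B * C * d ^ 2 := by
  subst hs ht
  field_simp
  ring

end Field

theorem genus_one_discrete_dubrovin_general (ω I0 B1 C1 : ℂ) (hω : ω ≠ 0)
    (μ μb xb r rb : ℂ) (hμ : μ ≠ 0) (hμb : μb ≠ 0) (hxb : xb ≠ 0)
    (h1 : r / μ + rb / μb = I0 * ((μ - μb) / (μ * μb)) + 2 * B1 * (xb / ω) * (μ - μb))
    (h2 : rb / μb - r / μ = I0 * ((μ + μb) / (μ * μb)) + 2 * B1 * xb - 2 * C1 * (ω / xb)) :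
    (μ - μb - ω) * ((rb - I0) / μb) ^ 2 - (μ - μb + ω) * ((r + I0) / μ) ^ 2 =
      2 * ω / (μ * μb) * ((rb - I0) * (r + I0)) - 4 * B1 * C1 * (μ - μb) ^ 2 := by
  set P := (r + I0) / μ
  set Q := (rb - I0) / μb
  have hsum : P + Q = 2 * B1 * (xb / ω) * (μ - μb) := by
    rw [add_div_add_sub_div_eq hμ hμb]
    linear_combination h1
  have hdiff : Q - P = 2 * B1 * xb - 2 * C1 * (ω / xb) := by
    rw [sub_div_sub_add_div_eq hμ hμb]
    linear_combination h2
  have hPQ : 2 * ω / (μ * μb) * ((rb - I0) * (r + I0)) = 2 * ω * (P * Q) := by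
    simp only [P, Q]
    field_simp
  rw [hPQ]
  linear_combination mul_sub_mul_eq_neg_four_mul_sq hω hxb hsum hdiff

/-- Eliminating `x̄` from the coupled genus-one discrete Dubrovin equations yields the
second-degree discrete Dubrovin equation. -/
theorem genus_one_discrete_dubrovin (ω I0 B1 C1 : ℂ) (hω : ω ≠ 0) (hB1 : B1 ≠ 0)
    (μ μb xb r rb : ℂ) (hμ : μ ≠ 0) (hμb : μb ≠ 0) (hxb : xb ≠ 0) (hne : μ ≠ μb)
    (h1 : r / μ + rb / μb = I0 * ((μ - μb) / (μ * μb)) + 2 * B1 * (xb / ω) * (μ - μb))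
    (h2 : rb / μb - r / μ = I0 * ((μ + μb) / (μ * μb)) + 2 * B1 * xb - 2 * C1 * (ω / xb)) :
    (μ - μb - ω) * ((rb - I0) / μb) ^ 2 - (μ - μb + ω) * ((r + I0) / μ) ^ 2 =
      2 * ω / (μ * μb) * ((rb - I0) * (r + I0)) - 4 * B1 * C1 * (μ - μb) ^ 2 :=
  genus_one_discrete_dubrovin_general ω I0 B1 C1 hω μ μb xb r rb hμ hμb hxb h1 h2
end
end
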